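/- arXiv:0911.4106 — 2 statements merged into one kernel-verified Lean document; each statement's English description precedes it below -/
import Mathlib

section
/- Let Λ and Ω be lattices of full rank in ℝ² with successive minima λ₁(Λ) ≤ λ₂(Λ) and λ₁(Ω) ≤ λ₂(Ω), and let x₁, x₂ ∈ Λ and y₁, y₂ ∈ Ω be vectors corresponding to the respective successive minima. Suppose x₁ = y₁, the angle between x₁ and x₂ equals the angle between y₁ and y₂, and λ₁(Λ) = λ₂(Λ). Then Δ(Λ) ≥ Δ(Ω). -/
/-! A pair `x₁, x₂` realizing the successive minima of a planar lattice is a ℤ-basis: a nonzero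
lattice vector `α x₁ + β x₂` with `|α|, |β| ≤ 1/2` would, by the strict triangle inequality, be
shorter than `x₁`, or independent of `x₁` and shorter than `x₂`. Hence `det Λ = λ₁ λ₂ sin θ`, so
`Δ(Λ) = π / (4 sin θ) · λ₁ / λ₂`, which for a fixed angle `θ` is largest when `λ₁ = λ₂`. -/

noncomputable section

open InnerProductGeometry Real
open scoped Classical

/-- The Euclidean plane `ℝ²`. -/
abbrev E2 := EuclideanSpace ℝ (Fin 2)

/-- `x₁, x₂` form a ℤ-basis of the lattice `Λ ⊆ ℝ²`: they are linearly independent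
over ℝ and `Λ` is exactly the set of their integer linear combinations. -/
def IsZBasis (Λ : Set E2) (x₁ x₂ : E2) : Prop :=
  LinearIndependent ℝ ![x₁, x₂] ∧ Λ = {v : E2 | ∃ a b : ℤ, v = a • x₁ + b • x₂}

/-- `Λ` is a lattice of full rank in `ℝ²`, i.e. `Λ = XZ²` for an invertible matrix `X`. -/
def IsLattice (Λ : Set E2) : Prop := ∃ x₁ x₂ : E2, IsZBasis Λ x₁ x₂

/-- The `i`-th successive minimum of `Λ`:
`λᵢ = inf {λ > 0 : Λ ∩ λB contains i linearly independent nonzero vectors}`. -/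
noncomputable def succMin (Λ : Set E2) (i : ℕ) : ℝ :=
  sInf {r : ℝ | 0 < r ∧ ∃ v : Fin i → E2,
    (∀ j, v j ∈ Λ ∧ ‖v j‖ ≤ r) ∧ LinearIndependent ℝ v}

/-- `|det X|` for the basis matrix with columns `x₁, x₂`. -/
def detB (x₁ x₂ : E2) : ℝ := |x₁ 0 * x₂ 1 - x₁ 1 * x₂ 0|

/-- The determinant of a lattice: `|det X|` for a basis matrix `X` of `Λ`
(independent of the choice of basis). -/
noncomputable def latDet (Λ : Set E2) : ℝ :=
  if h : IsLattice Λ then detB h.choose h.choose_spec.choose else 0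

/-- The lattice packing density `Δ(Λ) = π λ₁² / (4 det Λ)`. -/
noncomputable def density (Λ : Set E2) : ℝ :=
  π * (succMin Λ 1) ^ 2 / (4 * latDet Λ)

/-- `x₁, x₂` are vectors of `Λ` corresponding to the successive minima, chosen so that
the angle between them lies in `[0, π/2]`. -/
def IsMinPair (Λ : Set E2) (x₁ x₂ : E2) : Prop :=
  x₁ ∈ Λ ∧ x₂ ∈ Λ ∧ LinearIndependent ℝ ![x₁, x₂] ∧
    ‖x₁‖ = succMin Λ 1 ∧ ‖x₂‖ = succMin Λ 2 ∧ angle x₁ x₂ ≤ π / 2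

/-- The angle `θ(Λ)` of a lattice: the angle between a pair of vectors corresponding to the
successive minima chosen with angle in `[0, π/2]` (for a well-rounded lattice this does not
depend on the choice of such a pair). -/
noncomputable def latAngle (Λ : Set E2) : ℝ :=
  if h : ∃ p : E2 × E2, IsMinPair Λ p.1 p.2 then angle h.choose.1 h.choose.2 else 0

/-- `Λ` and `Ω` are similar lattices: `Ω = α U Λ` for a nonzero real `α` and an
orthogonal `2×2` matrix `U`. -/
def LatSimilar (Λ Ω : Set E2) : Prop :=
  ∃ (α : ℝ) (U : Matrix (Fin 2) (Fin 2) ℝ), α ≠ 0 ∧ U.transpose * U = 1 ∧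
    Ω = (fun v => α • Matrix.toEuclideanLin U v) '' Λ

/-- The hexagonal lattice, spanned over ℤ by `(1, 0)` and `(1/2, √3/2)`. -/
def hexLattice : Set E2 :=
  {v : E2 | ∃ a b : ℤ, v = a • ((WithLp.equiv 2 (Fin 2 → ℝ)).symm ![1, 0]) +
    b • ((WithLp.equiv 2 (Fin 2 → ℝ)).symm ![1 / 2, Real.sqrt 3 / 2])}

lemma LinearIndependent.pair_smul {V : Type*} [AddCommGroup V] [Module ℝ V] {x y : V}
    (h : LinearIndependent ℝ ![x, y]) {α β : ℝ} (hα : α ≠ 0) (hβ : β ≠ 0) :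
    LinearIndependent ℝ ![α • x, β • y] :=
  LinearIndependent.pair_iff.2 fun s t hst => by
    obtain ⟨h₁, h₂⟩ := LinearIndependent.pair_iff.1 h (s * α) (t * β) (by rw [← hst]; module)
    exact ⟨(mul_eq_zero.1 h₁).resolve_right hα, (mul_eq_zero.1 h₂).resolve_right hβ⟩

section StrictConvex

variable {V : Type*} [NormedAddCommGroup V] [NormedSpace ℝ V] [StrictConvexSpace ℝ V]

lemma norm_smul_add_smul_lt {x y : V} (h : LinearIndependent ℝ ![x, y]) (hxy : ‖x‖ ≤ ‖y‖)
    {α β : ℝ} (hα : |α| ≤ 1 / 2) (hβ : |β| ≤ 1 / 2) : ‖α • x + β • y‖ < ‖y‖ := by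
  have hy : 0 < ‖y‖ := norm_pos_iff.2 (by simpa using h.ne_zero 1)
  have hαx : ‖α • x‖ ≤ ‖y‖ / 2 := by
    rw [norm_smul, Real.norm_eq_abs]; nlinarith [norm_nonneg x, abs_nonneg α]
  have hβy : ‖β • y‖ ≤ ‖y‖ / 2 := by
    rw [norm_smul, Real.norm_eq_abs]; nlinarith [abs_nonneg β]
  by_cases hα0 : α = 0
  · simp only [hα0, zero_smul, zero_add]; linarith
  by_cases hβ0 : β = 0
  · simp only [hβ0, zero_smul, add_zero]; linarith
  have hray : ¬SameRay ℝ (α • x) (β • y) := fun hray =>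
    sameRay_or_sameRay_neg_iff_not_linearIndependent.1 (.inl hray) (h.pair_smul hα0 hβ0)
  linarith [norm_add_lt_of_not_sameRay hray]

end StrictConvex

lemma sin_angle_pos_of_linearIndependent {V : Type*} [NormedAddCommGroup V]
    [InnerProductSpace ℝ V] {x y : V} (h : LinearIndependent ℝ ![x, y]) :
    0 < Real.sin (angle x y) := by
  have hy : ∀ r : ℝ, y ≠ r • x := fun r hr => by
    simpa using (LinearIndependent.pair_iff.1 h r (-1) (by rw [hr]; module)).2
  refine (sin_angle_nonneg x y).lt_of_ne' fun h0 => ?_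
  rcases sin_eq_zero_iff_angle_eq_zero_or_angle_eq_pi.1 h0 with h0 | h0
  · obtain ⟨-, r, -, hr⟩ := angle_eq_zero_iff.1 h0
    exact hy r hr
  · obtain ⟨-, r, -, hr⟩ := angle_eq_pi_iff.1 h0
    exact hy r hr

lemma exists_smul_add_smul_eq {x₁ x₂ : E2} (h : LinearIndependent ℝ ![x₁, x₂]) (v : E2) :
    ∃ α β : ℝ, α • x₁ + β • x₂ = v := by
  have hv : v ∈ Submodule.span ℝ (Set.range ![x₁, x₂]) := by
    rw [h.span_eq_top_of_card_eq_finrank (by simp)]; trivial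
  obtain ⟨c, hc⟩ := (Submodule.mem_span_range_iff_exists_fun ℝ).1 hv
  exact ⟨c 0, c 1, by simpa [Fin.sum_univ_two] using hc⟩

lemma IsZBasis.mem_iff {Λ : Set E2} {b₁ b₂ v : E2} (hb : IsZBasis Λ b₁ b₂) :
    v ∈ Λ ↔ v ∈ Submodule.span ℤ {b₁, b₂} := by
  rw [hb.2, Submodule.mem_span_pair]
  simp only [Set.mem_ofPred_eq, eq_comm]

lemma IsZBasis.left_mem {Λ : Set E2} {b₁ b₂ : E2} (hb : IsZBasis Λ b₁ b₂) : b₁ ∈ Λ :=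
  hb.2 ▸ ⟨1, 0, by simp⟩

lemma IsZBasis.right_mem {Λ : Set E2} {b₁ b₂ : E2} (hb : IsZBasis Λ b₁ b₂) : b₂ ∈ Λ :=
  hb.2 ▸ ⟨0, 1, by simp⟩

section SuccessiveMinima

variable {Λ : Set E2}

lemma succMin_one_le_norm {v : E2} (hv : v ∈ Λ) (h0 : v ≠ 0) : succMin Λ 1 ≤ ‖v‖ :=
  csInf_le ⟨0, fun _ hr => hr.1.le⟩
    ⟨norm_pos_iff.2 h0, ![v], fun j => by fin_cases j; exact ⟨hv, le_rfl⟩,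
      linearIndependent_unique_iff.2 (by simpa using h0)⟩

lemma succMin_two_le_max_norm {u v : E2} (hu : u ∈ Λ) (hv : v ∈ Λ)
    (h : LinearIndependent ℝ ![u, v]) : succMin Λ 2 ≤ max ‖u‖ ‖v‖ := by
  refine csInf_le ⟨0, fun _ hr => hr.1.le⟩
    ⟨lt_max_of_lt_left (norm_pos_iff.2 (h.ne_zero 0)), ![u, v], fun j => ?_, h⟩
  fin_cases j
  · exact ⟨hu, le_max_left _ _⟩
  · exact ⟨hv, le_max_right _ _⟩

end SuccessiveMinima

namespace IsMinPair

variable {Λ : Set E2} {x₁ x₂ : E2} (hx : IsMinPair Λ x₁ x₂)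
include hx

lemma norm_le_norm : ‖x₁‖ ≤ ‖x₂‖ :=
  hx.2.2.2.1 ▸ succMin_one_le_norm hx.2.1 (by simpa using hx.2.2.1.ne_zero 1)

lemma norm_le_of_linearIndependent {v : E2} (hv : v ∈ Λ) (h : LinearIndependent ℝ ![x₁, v]) :
    ‖x₂‖ ≤ ‖v‖ := by
  have h₁ : ‖x₁‖ ≤ ‖v‖ := hx.2.2.2.1 ▸ succMin_one_le_norm hv (by simpa using h.ne_zero 1)
  simpa [← hx.2.2.2.2.1, max_eq_right h₁] using succMin_two_le_max_norm hx.1 hv h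

lemma eq_zero_of_smul_add_smul_mem {α β : ℝ} (hα : |α| ≤ 1 / 2) (hβ : |β| ≤ 1 / 2)
    (hmem : α • x₁ + β • x₂ ∈ Λ) : α = 0 ∧ β = 0 := by
  have hind := hx.2.2.1
  by_cases hβ0 : β = 0
  · refine ⟨by_contra fun hα0 => ?_, hβ0⟩
    subst hβ0
    have hx₁ : x₁ ≠ 0 := hind.ne_zero 0
    have := hx.2.2.2.1 ▸ succMin_one_le_norm (by simpa using hmem) (smul_ne_zero hα0 hx₁)
    rw [norm_smul, Real.norm_eq_abs] at this
    nlinarith [norm_pos_iff.2 hx₁]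
  · have hind' : LinearIndependent ℝ ![x₁, α • x₁ + β • x₂] :=
      LinearIndependent.pair_iff.2 fun s t hst => by
        obtain ⟨h₁, h₂⟩ := LinearIndependent.pair_iff.1 hind (s + t * α) (t * β)
          (by rw [← hst]; module)
        have ht : t = 0 := (mul_eq_zero.1 h₂).resolve_right hβ0
        exact ⟨by simpa [ht] using h₁, ht⟩
    exact absurd (hx.norm_le_of_linearIndependent hmem hind')
      (norm_smul_add_smul_lt hind hx.norm_le_norm hα hβ).not_ge

lemma isZBasis (hΛ : IsLattice Λ) : IsZBasis Λ x₁ x₂ := by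
  obtain ⟨b₁, b₂, hb⟩ := hΛ
  have hx₁ := hb.mem_iff.1 hx.1
  have hx₂ := hb.mem_iff.1 hx.2.1
  refine ⟨hx.2.2.1, Set.ext fun v => ⟨fun hv => ?_, ?_⟩⟩
  · obtain ⟨α, β, rfl⟩ := exists_smul_add_smul_eq hx.2.2.1 v
    have hmem : (α - round α) • x₁ + (β - round β) • x₂ ∈ Λ := by
      have e : (α - round α) • x₁ + (β - round β) • x₂ =
          α • x₁ + β • x₂ - (round α • x₁ + round β • x₂) := by
        rw [← Int.cast_smul_eq_zsmul ℝ (round α), ← Int.cast_smul_eq_zsmul ℝ (round β)]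
        module
      rw [e, hb.mem_iff]
      exact sub_mem (hb.mem_iff.1 hv) (add_mem (zsmul_mem hx₁ _) (zsmul_mem hx₂ _))
    obtain ⟨h₁, h₂⟩ := hx.eq_zero_of_smul_add_smul_mem (abs_sub_round α) (abs_sub_round β) hmem
    refine ⟨round α, round β, ?_⟩
    rw [← Int.cast_smul_eq_zsmul ℝ, ← Int.cast_smul_eq_zsmul ℝ, ← sub_eq_zero.1 h₁,
      ← sub_eq_zero.1 h₂]
  · rintro ⟨a, b, rfl⟩
    exact hb.mem_iff.2 <| add_mem (zsmul_mem hx₁ a) (zsmul_mem hx₂ b)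

end IsMinPair

lemma detB_eq_sin_angle_mul (x y : E2) : detB x y = Real.sin (angle x y) * (‖x‖ * ‖y‖) := by
  rw [sin_angle_mul_norm_mul_norm, detB, ← Real.sqrt_sq_eq_abs]
  congr 1
  simp only [PiLp.inner_apply, Fin.sum_univ_two, RCLike.inner_apply, conj_trivial]
  ring

lemma detB_pos {x y : E2} (h : LinearIndependent ℝ ![x, y]) : 0 < detB x y := by
  rw [detB_eq_sin_angle_mul]
  exact mul_pos (sin_angle_pos_of_linearIndependent h)
    (mul_pos (norm_pos_iff.2 (h.ne_zero 0)) (norm_pos_iff.2 (by simpa using h.ne_zero 1)))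

lemma detB_zsmul_add_zsmul (b₁ b₂ : E2) (p q r s : ℤ) :
    detB (p • b₁ + q • b₂) (r • b₁ + s • b₂) = |((p * s - q * r : ℤ) : ℝ)| * detB b₁ b₂ := by
  simp only [detB, ← Int.cast_smul_eq_zsmul ℝ, PiLp.add_apply, PiLp.smul_apply, smul_eq_mul,
    ← abs_mul]
  congr 1
  push_cast
  ring

lemma IsZBasis.detB_le {Λ : Set E2} {b₁ b₂ x₁ x₂ : E2} (hb : IsZBasis Λ b₁ b₂) (hx₁ : x₁ ∈ Λ)
    (hx₂ : x₂ ∈ Λ) (h : LinearIndependent ℝ ![x₁, x₂]) : detB b₁ b₂ ≤ detB x₁ x₂ := by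
  have hpos := detB_pos h
  rw [hb.2] at hx₁ hx₂
  obtain ⟨p, q, rfl⟩ := hx₁
  obtain ⟨r, s, rfl⟩ := hx₂
  rw [detB_zsmul_add_zsmul] at hpos ⊢
  have hd : p * s - q * r ≠ 0 := fun hd => by simp [hd] at hpos
  rw [← Int.cast_abs]
  exact le_mul_of_one_le_left (abs_nonneg _) (by exact_mod_cast Int.one_le_abs hd)

lemma IsZBasis.detB_eq {Λ : Set E2} {b₁ b₂ x₁ x₂ : E2} (hb : IsZBasis Λ b₁ b₂)
    (hx : IsZBasis Λ x₁ x₂) : detB b₁ b₂ = detB x₁ x₂ :=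
  le_antisymm (hb.detB_le hx.left_mem hx.right_mem hx.1) (hx.detB_le hb.left_mem hb.right_mem hb.1)

lemma latDet_eq_detB {Λ : Set E2} {x₁ x₂ : E2} (hx : IsZBasis Λ x₁ x₂) :
    latDet Λ = detB x₁ x₂ := by
  have hΛ : IsLattice Λ := ⟨x₁, x₂, hx⟩
  rw [latDet, dif_pos hΛ]
  exact hΛ.choose_spec.choose_spec.detB_eq hx

lemma IsMinPair.density_eq {Λ : Set E2} {x₁ x₂ : E2} (hΛ : IsLattice Λ)
    (hx : IsMinPair Λ x₁ x₂) :
    density Λ = π / (4 * Real.sin (angle x₁ x₂)) * (‖x₁‖ / ‖x₂‖) := by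
  have hx₁ : ‖x₁‖ ≠ 0 := norm_ne_zero_iff.2 (hx.2.2.1.ne_zero 0)
  rw [density, latDet_eq_detB (hx.isZBasis hΛ), detB_eq_sin_angle_mul, ← hx.2.2.2.1]
  field_simp

theorem stmt4_general (Λ Ω : Set E2) (hΛ : IsLattice Λ) (hΩ : IsLattice Ω)
    (x₁ x₂ y₁ y₂ : E2) (hx : IsMinPair Λ x₁ x₂) (hy : IsMinPair Ω y₁ y₂)
    (hangle : angle x₁ x₂ = angle y₁ y₂)
    (hWR : succMin Λ 1 = succMin Λ 2) :
    density Ω ≤ density Λ := by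
  have hx₂ : ‖x₂‖ ≠ 0 := norm_ne_zero_iff.2 (by simpa using hx.2.2.1.ne_zero 1)
  have hratio : ‖x₁‖ / ‖x₂‖ = 1 := by rw [hx.2.2.2.1, hWR, ← hx.2.2.2.2.1, div_self hx₂]
  rw [hx.density_eq hΛ, hy.density_eq hΩ, hratio, mul_one, hangle]
  exact mul_le_of_le_one_right (by have := sin_angle_nonneg y₁ y₂; positivity)
    (div_le_one_of_le₀ hy.norm_le_norm (norm_nonneg _))

/-- If `x₁, x₂` and `y₁, y₂` correspond to the successive minima of full-rank
lattices `Λ` and `Ω` respectively, `x₁ = y₁`, the angles between the pairs agree, and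
`λ₁(Λ) = λ₂(Λ)`, then `Δ(Λ) ≥ Δ(Ω)`. -/
theorem stmt4 (Λ Ω : Set E2) (hΛ : IsLattice Λ) (hΩ : IsLattice Ω)
    (x₁ x₂ y₁ y₂ : E2) (hx : IsMinPair Λ x₁ x₂) (hy : IsMinPair Ω y₁ y₂)
    (heq : x₁ = y₁) (hangle : angle x₁ x₂ = angle y₁ y₂)
    (hWR : succMin Λ 1 = succMin Λ 2) :
    density Ω ≤ density Λ :=
  stmt4_general Λ Ω hΛ hΩ x₁ x₂ y₁ y₂ hx hy hangle hWR
end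
end

section
/- Let Λ be a well-rounded lattice of full rank in ℝ². Then Δ(Λ) = π/(4 sin θ(Λ)) ≤ π/(2√3), with equality if and only if θ(Λ) = π/3; that is, among well-rounded lattices the packing density is maximized exactly by those with angle π/3, and these are precisely the lattices similar to the hexagonal lattice Λ_h. -/
noncomputable section

open InnerProductGeometry Real
open scoped Classical

/-!
A shortest nonzero vector `y₁` of `Λ` and a shortest vector `y₂` independent of it realise the
successive minima; replacing `y₂` by `-y₂` makes their angle `θ` at most `π / 2`, so
`⟪y₁, y₂⟫ ≥ 0`. If `Λ` is well rounded, then `‖y₂‖ = ‖y₁‖` and `y₁ - y₂ ∈ Λ` also give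
`2⟪y₁, y₂⟫ ≤ ‖y₁‖²`, i.e. `θ ≥ π / 3`, and for such a reduced pair every `s y₁ + t y₂` with
`|s|, |t| ≤ 1 / 2` is shorter than `y₁`.
Rounding coordinates therefore shows that `y₁, y₂` is a basis of `Λ`, so
`det Λ = λ₁² sin θ ≥ λ₁² √3 / 2`, with equality exactly when `θ = π / 3`.

For `θ = π / 3` the Gram matrix of `y₁, y₂` is `λ₁²` times that of the hexagonal basis, so an
orthogonal matrix carries `λ₁⁻¹ Λ` onto `Λ_h`. Conversely, a lattice similar to `Λ_h` has a basis
with a multiple of the hexagonal Gram matrix; its density is then `π / (2√3)`, which forces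
`θ = π / 3`.
-/

open scoped RealInnerProductSpace

section InnerProductSpace

variable {V : Type*} [NormedAddCommGroup V] [InnerProductSpace ℝ V]

lemma norm_smul_add_smul_sq (x y : V) (a b : ℝ) :
    ‖a • x + b • y‖ ^ 2 = a ^ 2 * ‖x‖ ^ 2 + 2 * (a * b) * ⟪x, y⟫ + b ^ 2 * ‖y‖ ^ 2 := by
  rw [norm_add_sq_real, norm_smul, norm_smul, inner_smul_left, inner_smul_right, mul_pow, mul_pow,
    Real.norm_eq_abs, Real.norm_eq_abs, sq_abs, sq_abs, RCLike.conj_to_real]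
  ring

lemma inner_nonneg_of_angle_le_pi_div_two {x y : V} (h : angle x y ≤ π / 2) : 0 ≤ ⟪x, y⟫ := by
  rw [angle, Real.arccos_le_pi_div_two] at h
  rcases (norm_nonneg x).eq_or_lt with hx | hx
  · simp [norm_eq_zero.1 hx.symm]
  rcases (norm_nonneg y).eq_or_lt with hy | hy
  · simp [norm_eq_zero.1 hy.symm]
  exact (div_nonneg_iff.1 h).elim (·.1) fun h' => absurd h'.2 (not_le.2 (by positivity))

lemma angle_eq_pi_div_three_iff {x y : V} (hx : x ≠ 0) (hn : ‖y‖ = ‖x‖) :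
    angle x y = π / 3 ↔ 2 * ⟪x, y⟫ = ‖x‖ ^ 2 := by
  rw [← Real.injOn_cos.eq_iff ⟨angle_nonneg x y, angle_le_pi x y⟩
    ⟨by positivity, by linarith [Real.pi_pos]⟩, cos_angle, Real.cos_pi_div_three, hn,
    div_eq_iff (by positivity)]
  constructor <;> intro h <;> linarith

lemma norm_smul_add_smul_lt_of_reduced {x y : V} (hx : x ≠ 0) (hnorm : ‖y‖ = ‖x‖)
    (h0 : 0 ≤ ⟪x, y⟫) (h2 : 2 * ⟪x, y⟫ ≤ ‖x‖ ^ 2) {s t : ℝ} (hs : |s| ≤ 1 / 2)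
    (ht : |t| ≤ 1 / 2) : ‖s • x + t • y‖ < ‖x‖ := by
  have hs2 : s ^ 2 ≤ 1 / 4 := by nlinarith [sq_abs s, abs_nonneg s]
  have ht2 : t ^ 2 ≤ 1 / 4 := by nlinarith [sq_abs t, abs_nonneg t]
  have hx2 : 0 < ‖x‖ ^ 2 := by positivity
  refine lt_of_pow_lt_pow_left₀ 2 (norm_nonneg x) ?_
  rw [norm_smul_add_smul_sq, hnorm]
  nlinarith [mul_nonneg (sq_nonneg (s - t)) h0,
    mul_nonneg (by linarith : (0 : ℝ) ≤ 1 / 2 - s ^ 2 - t ^ 2) (by linarith : 0 ≤ ‖x‖ ^ 2 + ⟪x, y⟫)]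

end InnerProductSpace

section Orthogonal

open Matrix

variable {ι : Type*} [Fintype ι] [DecidableEq ι]

lemma inner_toEuclideanLin_of_transpose_mul_self {U : Matrix ι ι ℝ} (hU : Uᵀ * U = 1)
    (v w : EuclideanSpace ℝ ι) : ⟪toEuclideanLin U v, toEuclideanLin U w⟫ = ⟪v, w⟫ := by
  rw [← LinearMap.adjoint_inner_right, ← toEuclideanLin_conjTranspose_eq_adjoint,
    conjTranspose_eq_transpose_of_trivial, ← LinearMap.comp_apply, ← toLpLin_mul_same, hU,
    toLpLin_one, LinearMap.id_apply]

lemma inner_smul_toEuclideanLin {U : Matrix ι ι ℝ} (hU : Uᵀ * U = 1) (α : ℝ)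
    (v w : EuclideanSpace ℝ ι) :
    ⟪(α • toEuclideanLin U) v, (α • toEuclideanLin U) w⟫ = α ^ 2 * ⟪v, w⟫ := by
  rw [LinearMap.smul_apply, LinearMap.smul_apply, inner_smul_left, inner_smul_right,
    inner_toEuclideanLin_of_transpose_mul_self hU, RCLike.conj_to_real, sq, mul_assoc]

lemma injective_smul_toEuclideanLin {U : Matrix ι ι ℝ} (hU : Uᵀ * U = 1) {α : ℝ} (hα : α ≠ 0) :
    Function.Injective (α • toEuclideanLin U) := by
  refine (injective_iff_map_eq_zero _).2 fun v hv => ?_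
  have := inner_smul_toEuclideanLin hU α v v
  rw [hv, inner_zero_left, eq_comm, mul_eq_zero] at this
  exact inner_self_eq_zero.1 (this.resolve_left (pow_ne_zero 2 hα))

lemma exists_transpose_mul_self_eq_one_of_inner_eq {x y : ι → EuclideanSpace ℝ ι}
    (hx : LinearIndependent ℝ x) (h : ∀ i j, ⟪x i, x j⟫ = ⟪y i, y j⟫) :
    ∃ U : Matrix ι ι ℝ, Uᵀ * U = 1 ∧ ∀ i, toEuclideanLin U (x i) = y i := by
  set P : Matrix ι ι ℝ := of fun i => (x i).ofLp
  set Q : Matrix ι ι ℝ := of fun i => (y i).ofLp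
  have hP : IsUnit P.det := (isUnit_iff_isUnit_det P).1 <| linearIndependent_rows_iff_isUnit.1 <|
    hx.map' (WithLp.linearEquiv 2 ℝ (ι → ℝ)).toLinearMap (LinearEquiv.ker _)
  have hPQ : P * Pᵀ = Q * Qᵀ := by
    ext i j
    simpa [P, Q, mul_apply, PiLp.inner_apply, mul_comm] using h j i
  refine ⟨(P⁻¹ * Q)ᵀ, ?_, fun i => ?_⟩
  · rw [transpose_transpose, transpose_mul, Matrix.mul_assoc, ← Matrix.mul_assoc Q, ← hPQ,
      Matrix.mul_assoc, ← transpose_mul, ← Matrix.mul_assoc, nonsing_inv_mul _ hP,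
      Matrix.one_mul, transpose_one]
  · have hPU : P * (P⁻¹ * Q) = Q := by
      rw [← Matrix.mul_assoc, mul_nonsing_inv _ hP, Matrix.one_mul]
    ext j
    simpa [toLpLin_apply, mulVec_transpose, vecMul, mul_apply, P, Q, dotProduct] using
      congrFun (congrFun hPU i) j

end Orthogonal

section Trigonometry

lemma pi_div_four_sin_le {θ : ℝ} (h₁ : π / 3 ≤ θ) (h₂ : θ ≤ π / 2) :
    π / (4 * Real.sin θ) ≤ π / (4 * Real.sin (π / 3)) := by
  have hsin : Real.sin (π / 3) ≤ Real.sin θ :=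
    Real.sin_le_sin_of_le_of_le_pi_div_two (by linarith [Real.pi_pos]) h₂ h₁
  have : 0 < Real.sin (π / 3) := by rw [Real.sin_pi_div_three]; positivity
  gcongr

lemma pi_div_four_sin_eq_iff {θ : ℝ} (h₁ : π / 3 ≤ θ) (h₂ : θ ≤ π / 2) :
    π / (4 * Real.sin θ) = π / (4 * Real.sin (π / 3)) ↔ θ = π / 3 := by
  refine ⟨fun h => Real.injOn_sin ⟨by linarith [Real.pi_pos], h₂⟩
    ⟨by linarith [Real.pi_pos], by linarith [Real.pi_pos]⟩ ?_, fun h => h ▸ rfl⟩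
  rw [div_eq_mul_inv, div_eq_mul_inv] at h
  linarith [inv_inj.1 (mul_left_cancel₀ Real.pi_ne_zero h)]

end Trigonometry

lemma one_le_sq_add_mul_add_sq {a b : ℤ} (h : a ≠ 0 ∨ b ≠ 0) : 1 ≤ a ^ 2 + a * b + b ^ 2 := by
  have : 0 < a ^ 2 + b ^ 2 := by rcases h with h | h <;> positivity
  nlinarith [sq_nonneg (a + b)]

section Plane

lemma inner_eq_coords (x y : E2) : ⟪x, y⟫ = x 0 * y 0 + x 1 * y 1 := by
  simp [PiLp.inner_apply, Fin.sum_univ_two, mul_comm]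

lemma norm_sq_eq_coords (x : E2) : ‖x‖ ^ 2 = x 0 ^ 2 + x 1 ^ 2 := by
  rw [← real_inner_self_eq_norm_sq, inner_eq_coords]; ring

def cross (x y : E2) : ℝ := x 0 * y 1 - x 1 * y 0

lemma detB_eq_abs_cross (x y : E2) : detB x y = |cross x y| := rfl

lemma cross_sq (x y : E2) : cross x y ^ 2 = ‖x‖ ^ 2 * ‖y‖ ^ 2 - ⟪x, y⟫ ^ 2 := by
  simp only [cross, norm_sq_eq_coords, inner_eq_coords]; ring

lemma cross_zsmul_add_zsmul (x y : E2) (a b c d : ℤ) :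
    cross (a • x + b • y) (c • x + d • y) = ((a * d - b * c : ℤ) : ℝ) * cross x y := by
  simp only [← Int.cast_smul_eq_zsmul ℝ, cross, PiLp.add_apply, PiLp.smul_apply, smul_eq_mul]
  push_cast; ring

lemma linearIndependent_pair_iff_cross_ne_zero {x y : E2} :
    LinearIndependent ℝ ![x, y] ↔ cross x y ≠ 0 := by
  have hdet : cross x y = (Matrix.of ![x.ofLp, y.ofLp]).det := by simp [cross, Matrix.det_fin_two]
  rw [hdet, ← isUnit_iff_ne_zero, ← Matrix.isUnit_iff_isUnit_det,
    ← Matrix.linearIndependent_rows_iff_isUnit,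
    ← (WithLp.linearEquiv 2 ℝ (Fin 2 → ℝ)).toLinearMap.linearIndependent_iff (LinearEquiv.ker _)]
  congr!
  ext i : 1
  fin_cases i <;> rfl

lemma detB_eq_norm_mul_norm_mul_sin_angle (x y : E2) :
    detB x y = ‖x‖ * ‖y‖ * Real.sin (angle x y) := by
  rw [mul_comm, sin_angle_mul_norm_mul_norm, detB_eq_abs_cross, ← Real.sqrt_sq_eq_abs, cross_sq,
    real_inner_self_eq_norm_sq, real_inner_self_eq_norm_sq]
  ring_nf

lemma LinearIndependent.pair_left_or {m x y : E2} (hm : m ≠ 0) (h : LinearIndependent ℝ ![x, y]) :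
    LinearIndependent ℝ ![m, x] ∨ LinearIndependent ℝ ![m, y] := by
  simp only [linearIndependent_pair_iff_cross_ne_zero] at h ⊢
  by_contra! hmxy
  have hm0 : m 0 * cross x y = x 0 * cross m y - y 0 * cross m x := by unfold cross; ring
  have hm1 : m 1 * cross x y = x 1 * cross m y - y 1 * cross m x := by unfold cross; ring
  rw [hmxy.1, hmxy.2, mul_zero, mul_zero, sub_zero] at hm0 hm1
  exact hm (by ext i; fin_cases i <;> simp [(mul_eq_zero.1 hm0).resolve_right h,
    (mul_eq_zero.1 hm1).resolve_right h])

end Plane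

section Lattice

variable {Λ : Set E2} {x₁ x₂ y₁ y₂ : E2}

lemma IsZBasis.eq_span (hB : IsZBasis Λ x₁ x₂) : Λ = Submodule.span ℤ {x₁, x₂} := by
  rw [hB.2]; ext v; simp [Submodule.mem_span_pair, eq_comm]

lemma IsZBasis.zsmul_add_zsmul_mem (hB : IsZBasis Λ x₁ x₂) {v w : E2} (hv : v ∈ Λ) (hw : w ∈ Λ)
    (a b : ℤ) : a • v + b • w ∈ Λ := by
  rw [hB.eq_span] at *
  exact add_mem (Submodule.smul_mem _ a hv) (Submodule.smul_mem _ b hw)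

lemma IsZBasis.sub_mem (hB : IsZBasis Λ x₁ x₂) {v w : E2} (hv : v ∈ Λ) (hw : w ∈ Λ) :
    v - w ∈ Λ := by
  simpa [sub_eq_add_neg] using hB.zsmul_add_zsmul_mem hv hw 1 (-1)

lemma IsZBasis.neg_mem (hB : IsZBasis Λ x₁ x₂) {v : E2} (hv : v ∈ Λ) : -v ∈ Λ := by
  simpa using hB.zsmul_add_zsmul_mem hv hv 0 (-1)

lemma IsZBasis.left_ne_zero (hB : IsZBasis Λ x₁ x₂) : x₁ ≠ 0 := by
  simpa using hB.1.ne_zero 0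

lemma IsZBasis.left_mem_s16 (hB : IsZBasis Λ x₁ x₂) : x₁ ∈ Λ := hB.2 ▸ ⟨1, 0, by simp⟩

lemma IsZBasis.right_mem_s16 (hB : IsZBasis Λ x₁ x₂) : x₂ ∈ Λ := hB.2 ▸ ⟨0, 1, by simp⟩

lemma IsZBasis.finite_norm_le (hB : IsZBasis Λ x₁ x₂) (R : ℝ) : {v ∈ Λ | ‖v‖ ≤ R}.Finite := by
  let b := basisOfLinearIndependentOfCardEqFinrank hB.1 (by simp)
  have hb : Set.range b = {x₁, x₂} := by
    simp [b, coe_basisOfLinearIndependentOfCardEqFinrank, Set.pair_comm]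
  refine (ZSpan.setFinite_inter b (Metric.isBounded_closedBall (x := 0) (r := R))).subset ?_
  rintro v ⟨hv, hvR⟩
  exact ⟨mem_closedBall_zero_iff.2 hvR, hb ▸ hB.eq_span ▸ hv⟩

lemma IsZBasis.exists_forall_norm_le (hB : IsZBasis Λ x₁ x₂) {P : E2 → Prop} {v₀ : E2}
    (hv₀ : v₀ ∈ Λ) (hP : P v₀) : ∃ m ∈ Λ, P m ∧ ∀ v ∈ Λ, P v → ‖m‖ ≤ ‖v‖ := by
  obtain ⟨m, ⟨hm, hmv₀, hPm⟩, hmin⟩ := Set.exists_min_image {v ∈ Λ | ‖v‖ ≤ ‖v₀‖ ∧ P v} (‖·‖)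
    ((hB.finite_norm_le ‖v₀‖).subset fun v hv => ⟨hv.1, hv.2.1⟩) ⟨v₀, hv₀, le_rfl, hP⟩
  refine ⟨m, hm, hPm, fun v hv hPv => ?_⟩
  rcases le_or_gt ‖v‖ ‖v₀‖ with hvv₀ | hvv₀
  · exact hmin v ⟨hv, hvv₀, hPv⟩
  · exact hmv₀.trans hvv₀.le

lemma IsZBasis.exists_cross_eq_intCast_mul (hB : IsZBasis Λ x₁ x₂) (hy₁ : y₁ ∈ Λ)
    (hy₂ : y₂ ∈ Λ) : ∃ k : ℤ, cross y₁ y₂ = k * cross x₁ x₂ := by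
  rw [hB.2] at hy₁ hy₂
  obtain ⟨a, b, rfl⟩ := hy₁
  obtain ⟨c, d, rfl⟩ := hy₂
  exact ⟨_, cross_zsmul_add_zsmul x₁ x₂ a b c d⟩

lemma IsZBasis.detB_eq_s16 (hx : IsZBasis Λ x₁ x₂) (hy : IsZBasis Λ y₁ y₂) :
    detB x₁ x₂ = detB y₁ y₂ := by
  obtain ⟨k, hk⟩ := hx.exists_cross_eq_intCast_mul hy.left_mem_s16 hy.right_mem_s16
  obtain ⟨l, hl⟩ := hy.exists_cross_eq_intCast_mul hx.left_mem_s16 hx.right_mem_s16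
  have hx0 : cross x₁ x₂ ≠ 0 := linearIndependent_pair_iff_cross_ne_zero.1 hx.1
  have hkl : k * l = 1 := by
    have : ((k * l : ℤ) : ℝ) * cross x₁ x₂ = 1 * cross x₁ x₂ := by
      rw [mul_comm k, Int.cast_mul, mul_assoc, ← hk, ← hl, one_mul]
    exact_mod_cast mul_right_cancel₀ hx0 this
  rw [detB_eq_abs_cross, detB_eq_abs_cross, hk, abs_mul]
  rcases Int.eq_one_or_neg_one_of_mul_eq_one hkl with rfl | rfl <;> simp

lemma IsZBasis.latDet_eq (hB : IsZBasis Λ x₁ x₂) : latDet Λ = detB x₁ x₂ := by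
  have hΛ : IsLattice Λ := ⟨x₁, x₂, hB⟩
  rw [latDet, dif_pos hΛ]
  exact hΛ.choose_spec.choose_spec.detB_eq_s16 hB

end Lattice

section SuccessiveMinima

variable {Λ : Set E2}

lemma succMin_one_le {v : E2} (hv : v ∈ Λ) (hv0 : v ≠ 0) : succMin Λ 1 ≤ ‖v‖ :=
  csInf_le ⟨0, fun _ hr => hr.1.le⟩
    ⟨norm_pos_iff.2 hv0, fun _ => v, fun _ => ⟨hv, le_rfl⟩, linearIndependent_unique_iff.2 hv0⟩

lemma succMin_one_eq {m : E2} (hm : m ∈ Λ) (hm0 : m ≠ 0)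
    (hmin : ∀ v ∈ Λ, v ≠ 0 → ‖m‖ ≤ ‖v‖) : succMin Λ 1 = ‖m‖ := by
  refine (succMin_one_le hm hm0).antisymm (le_csInf ⟨_, norm_pos_iff.2 hm0, fun _ => m,
    fun _ => ⟨hm, le_rfl⟩, linearIndependent_unique_iff.2 hm0⟩ ?_)
  rintro r ⟨-, v, hv, hli⟩
  exact (hmin (v 0) (hv 0).1 (hli.ne_zero 0)).trans (hv 0).2

lemma succMin_two_eq {m w : E2} (hm : m ∈ Λ) (hw : w ∈ Λ) (hmw : LinearIndependent ℝ ![m, w])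
    (hmw_le : ‖m‖ ≤ ‖w‖) (hwmin : ∀ v ∈ Λ, LinearIndependent ℝ ![m, v] → ‖w‖ ≤ ‖v‖) :
    succMin Λ 2 = ‖w‖ := by
  have hmem : ‖w‖ ∈ {r : ℝ | 0 < r ∧ ∃ v : Fin 2 → E2,
      (∀ j, v j ∈ Λ ∧ ‖v j‖ ≤ r) ∧ LinearIndependent ℝ v} := by
    refine ⟨norm_pos_iff.2 (by simpa using hmw.ne_zero 1), ![m, w], fun j => ?_, hmw⟩
    fin_cases j
    exacts [⟨hm, hmw_le⟩, ⟨hw, le_rfl⟩]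
  refine (csInf_le ⟨0, fun _ hr => hr.1.le⟩ hmem).antisymm (le_csInf ⟨_, hmem⟩ ?_)
  rintro r ⟨-, v, hv, hli⟩
  rw [show v = ![v 0, v 1] by ext1 i; fin_cases i <;> rfl] at hli
  rcases hli.pair_left_or (by simpa using hmw.ne_zero 0) with h | h
  exacts [(hwmin _ (hv 0).1 h).trans (hv 0).2, (hwmin _ (hv 1).1 h).trans (hv 1).2]

lemma isMinPair_of_forall_norm_le {m w : E2} (hm : m ∈ Λ) (hw : w ∈ Λ)
    (hmw : LinearIndependent ℝ ![m, w]) (hmin : ∀ v ∈ Λ, v ≠ 0 → ‖m‖ ≤ ‖v‖)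
    (hwmin : ∀ v ∈ Λ, LinearIndependent ℝ ![m, v] → ‖w‖ ≤ ‖v‖) (hangle : angle m w ≤ π / 2) :
    IsMinPair Λ m w :=
  ⟨hm, hw, hmw, (succMin_one_eq hm (by simpa using hmw.ne_zero 0) hmin).symm,
    (succMin_two_eq hm hw hmw (hmin w hw (by simpa using hmw.ne_zero 1)) hwmin).symm, hangle⟩

lemma IsZBasis.exists_isMinPair {x₁ x₂ : E2} (hB : IsZBasis Λ x₁ x₂) :
    ∃ y₁ y₂, IsMinPair Λ y₁ y₂ := by
  obtain ⟨m, hm, hm0, hmin⟩ :=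
    hB.exists_forall_norm_le (P := (· ≠ 0)) hB.left_mem_s16 hB.left_ne_zero
  obtain ⟨v₀, hv₀, hmv₀⟩ : ∃ v ∈ Λ, LinearIndependent ℝ ![m, v] := by
    rcases hB.1.pair_left_or hm0 with h | h
    exacts [⟨x₁, hB.left_mem_s16, h⟩, ⟨x₂, hB.right_mem_s16, h⟩]
  obtain ⟨w, hw, hmw, hwmin⟩ :=
    hB.exists_forall_norm_le (P := fun v => LinearIndependent ℝ ![m, v]) hv₀ hmv₀
  by_cases hangle : angle m w ≤ π / 2
  · exact ⟨m, w, isMinPair_of_forall_norm_le hm hw hmw hmin hwmin hangle⟩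
  · refine ⟨m, -w, isMinPair_of_forall_norm_le hm (hB.neg_mem hw) (by simpa using hmw) hmin
      (by simpa using hwmin) ?_⟩
    rw [angle_neg_right]
    linarith

lemma exists_isMinPair_latAngle_eq (hΛ : IsLattice Λ) :
    ∃ y₁ y₂, IsMinPair Λ y₁ y₂ ∧ latAngle Λ = angle y₁ y₂ := by
  obtain ⟨x₁, x₂, hB⟩ := hΛ
  have h : ∃ p : E2 × E2, IsMinPair Λ p.1 p.2 :=
    let ⟨y₁, y₂, hy⟩ := hB.exists_isMinPair; ⟨(y₁, y₂), hy⟩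
  exact ⟨_, _, h.choose_spec, by rw [latAngle, dif_pos h]⟩

end SuccessiveMinima

section WellRounded

variable {Λ : Set E2} {x₁ x₂ y₁ y₂ : E2}

lemma IsZBasis.of_reduced (hB : IsZBasis Λ x₁ x₂) (hy₁ : y₁ ∈ Λ) (hy₂ : y₂ ∈ Λ)
    (hli : LinearIndependent ℝ ![y₁, y₂]) (hmin : ∀ v ∈ Λ, v ≠ 0 → ‖y₁‖ ≤ ‖v‖)
    (hnorm : ‖y₂‖ = ‖y₁‖) (h0 : 0 ≤ ⟪y₁, y₂⟫) (h2 : 2 * ⟪y₁, y₂⟫ ≤ ‖y₁‖ ^ 2) :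
    IsZBasis Λ y₁ y₂ := by
  refine ⟨hli, Set.Subset.antisymm (fun v hv => ?_) ?_⟩
  · have hspan := hli.span_eq_top_of_card_eq_finrank (by simp)
    rw [Matrix.range_cons_cons_empty] at hspan
    obtain ⟨s, t, rfl⟩ := Submodule.mem_span_pair.1 (hspan ▸ Submodule.mem_top (x := v))
    set w := (s • y₁ + t • y₂) - (round s • y₁ + round t • y₂) with hw
    have hwΛ : w ∈ Λ := hB.sub_mem hv (hB.zsmul_add_zsmul_mem hy₁ hy₂ _ _)
    have hw' : w = (s - round s) • y₁ + (t - round t) • y₂ := by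
      simp only [hw, ← Int.cast_smul_eq_zsmul ℝ]; module
    have hwlt : ‖w‖ < ‖y₁‖ := hw' ▸ norm_smul_add_smul_lt_of_reduced
      (by simpa using hli.ne_zero 0) hnorm h0 h2 (abs_sub_round s) (abs_sub_round t)
    have hw0 : w = 0 := by_contra fun hw0 => (hmin w hwΛ hw0).not_gt hwlt
    exact ⟨round s, round t, sub_eq_zero.1 hw0⟩
  · rintro _ ⟨a, b, rfl⟩
    exact hB.zsmul_add_zsmul_mem hy₁ hy₂ a b

lemma IsMinPair.ne_zero (hP : IsMinPair Λ y₁ y₂) : y₁ ≠ 0 := by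
  simpa using hP.2.2.1.ne_zero 0

lemma IsMinPair.norm_le (hP : IsMinPair Λ y₁ y₂) {v : E2} (hv : v ∈ Λ) (hv0 : v ≠ 0) :
    ‖y₁‖ ≤ ‖v‖ :=
  hP.2.2.2.1 ▸ succMin_one_le hv hv0

lemma IsMinPair.norm_eq (hP : IsMinPair Λ y₁ y₂) (hWR : succMin Λ 1 = succMin Λ 2) :
    ‖y₂‖ = ‖y₁‖ := by
  rw [hP.2.2.2.1, hP.2.2.2.2.1, hWR]

lemma IsMinPair.two_inner_le (hP : IsMinPair Λ y₁ y₂) (hWR : succMin Λ 1 = succMin Λ 2)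
    (hB : IsZBasis Λ x₁ x₂) : 2 * ⟪y₁, y₂⟫ ≤ ‖y₁‖ ^ 2 := by
  have hne : y₁ - y₂ ≠ 0 := by
    simpa [sub_eq_zero] using hP.2.2.1.injective.ne (show (0 : Fin 2) ≠ 1 by decide)
  have h := pow_le_pow_left₀ (norm_nonneg _) (hP.norm_le (hB.sub_mem hP.1 hP.2.1) hne) 2
  rw [norm_sub_sq_real, hP.norm_eq hWR] at h
  linarith

lemma IsMinPair.isZBasis_s16 (hP : IsMinPair Λ y₁ y₂) (hWR : succMin Λ 1 = succMin Λ 2)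
    (hB : IsZBasis Λ x₁ x₂) : IsZBasis Λ y₁ y₂ :=
  hB.of_reduced hP.1 hP.2.1 hP.2.2.1 (fun _ => hP.norm_le) (hP.norm_eq hWR)
    (inner_nonneg_of_angle_le_pi_div_two hP.2.2.2.2.2) (hP.two_inner_le hWR hB)

lemma IsMinPair.pi_div_three_le_angle (hP : IsMinPair Λ y₁ y₂)
    (hWR : succMin Λ 1 = succMin Λ 2) (hB : IsZBasis Λ x₁ x₂) : π / 3 ≤ angle y₁ y₂ := by
  have hcos : ⟪y₁, y₂⟫ / (‖y₁‖ * ‖y₂‖) ≤ 1 / 2 := by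
    have := norm_pos_iff.2 hP.ne_zero
    rw [hP.norm_eq hWR, div_le_iff₀ (by positivity)]
    linarith [hP.two_inner_le hWR hB]
  calc π / 3 = Real.arccos (1 / 2) := by
        rw [← Real.cos_pi_div_three, Real.arccos_cos (by positivity) (by linarith [Real.pi_pos])]
    _ ≤ angle y₁ y₂ := Real.arccos_le_arccos hcos

lemma IsZBasis.density_eq (hB : IsZBasis Λ y₁ y₂) (h₁ : ‖y₁‖ = succMin Λ 1)
    (h₂ : ‖y₂‖ = succMin Λ 1) : density Λ = π / (4 * Real.sin (angle y₁ y₂)) := by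
  have hy₁ : ‖y₁‖ ≠ 0 := norm_ne_zero_iff.2 hB.left_ne_zero
  rw [density, hB.latDet_eq, detB_eq_norm_mul_norm_mul_sin_angle, h₂, ← h₁]
  field_simp

end WellRounded

section Hexagonal

variable {Λ : Set E2} {w₁ w₂ : E2}

lemma norm_zsmul_add_zsmul_sq_of_hexagonal (hn : ‖w₂‖ = ‖w₁‖) (hi : 2 * ⟪w₁, w₂⟫ = ‖w₁‖ ^ 2)
    (a b : ℤ) : ‖a • w₁ + b • w₂‖ ^ 2 = ((a ^ 2 + a * b + b ^ 2 : ℤ) : ℝ) * ‖w₁‖ ^ 2 := by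
  rw [← Int.cast_smul_eq_zsmul ℝ, ← Int.cast_smul_eq_zsmul ℝ, norm_smul_add_smul_sq, hn]
  push_cast
  linear_combination (a : ℝ) * b * hi

lemma IsZBasis.succMin_one_eq_of_hexagonal (hB : IsZBasis Λ w₁ w₂) (hn : ‖w₂‖ = ‖w₁‖)
    (hi : 2 * ⟪w₁, w₂⟫ = ‖w₁‖ ^ 2) : succMin Λ 1 = ‖w₁‖ := by
  refine succMin_one_eq hB.left_mem_s16 hB.left_ne_zero fun v hv hv0 => ?_
  rw [hB.2] at hv
  obtain ⟨a, b, rfl⟩ := hv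
  have hab : a ≠ 0 ∨ b ≠ 0 := by
    by_contra! h
    simp [h] at hv0
  have h1 : (1 : ℝ) ≤ ((a ^ 2 + a * b + b ^ 2 : ℤ) : ℝ) := by
    exact_mod_cast one_le_sq_add_mul_add_sq hab
  refine le_of_pow_le_pow_left₀ two_ne_zero (norm_nonneg _) ?_
  rw [norm_zsmul_add_zsmul_sq_of_hexagonal hn hi]
  nlinarith [sq_nonneg ‖w₁‖]

lemma IsZBasis.density_eq_of_hexagonal (hB : IsZBasis Λ w₁ w₂) (hn : ‖w₂‖ = ‖w₁‖)
    (hi : 2 * ⟪w₁, w₂⟫ = ‖w₁‖ ^ 2) : density Λ = π / (4 * Real.sin (π / 3)) := by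
  have h₁ := (hB.succMin_one_eq_of_hexagonal hn hi).symm
  rw [hB.density_eq h₁ (hn.trans h₁),
    (angle_eq_pi_div_three_iff hB.left_ne_zero hn).2 hi]

def hexBasis₁ : E2 := (WithLp.equiv 2 (Fin 2 → ℝ)).symm ![1, 0]

def hexBasis₂ : E2 := (WithLp.equiv 2 (Fin 2 → ℝ)).symm ![1 / 2, √3 / 2]

lemma hexLattice_isZBasis : IsZBasis hexLattice hexBasis₁ hexBasis₂ := by
  refine ⟨linearIndependent_pair_iff_cross_ne_zero.2 ?_, rfl⟩
  simp [cross, hexBasis₁, hexBasis₂]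

lemma norm_hexBasis₁ : ‖hexBasis₁‖ = 1 := by
  simp [EuclideanSpace.norm_eq, hexBasis₁]

lemma norm_hexBasis₂ : ‖hexBasis₂‖ = 1 := by
  rw [← sq_eq_sq₀ (norm_nonneg _) zero_le_one, norm_sq_eq_coords]
  norm_num [hexBasis₂, div_pow]

lemma inner_hexBasis : ⟪hexBasis₁, hexBasis₂⟫ = 1 / 2 := by
  simp [inner_eq_coords, hexBasis₁, hexBasis₂]

end Hexagonal

section Similarity

open Matrix

variable {Λ : Set E2} {x₁ x₂ : E2}

lemma isZBasis_image_iff {f : E2 →ₗ[ℝ] E2} (hf : Function.Injective f) :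
    IsZBasis (f '' Λ) (f x₁) (f x₂) ↔ IsZBasis Λ x₁ x₂ := by
  have himage : f '' {v | ∃ a b : ℤ, v = a • x₁ + b • x₂} =
      {v | ∃ a b : ℤ, v = a • f x₁ + b • f x₂} := by
    ext v; simp [eq_comm]
  rw [IsZBasis, IsZBasis, ← himage, (Set.image_injective.2 hf).eq_iff,
    show ![f x₁, f x₂] = f ∘ ![x₁, x₂] by ext1 i; fin_cases i <;> rfl,
    f.linearIndependent_iff (LinearMap.ker_eq_bot.2 hf)]

lemma IsZBasis.latSimilar_hexLattice (hB : IsZBasis Λ x₁ x₂) (hn : ‖x₂‖ = ‖x₁‖)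
    (hi : 2 * ⟪x₁, x₂⟫ = ‖x₁‖ ^ 2) : LatSimilar Λ hexLattice := by
  set r := ‖x₁‖
  have hr : r ≠ 0 := norm_ne_zero_iff.2 hB.left_ne_zero
  obtain ⟨U, hU, hUx⟩ := exists_transpose_mul_self_eq_one_of_inner_eq
    (x := ![x₁, x₂]) (y := ![r • hexBasis₁, r • hexBasis₂]) hB.1 (by
      have hx₁₂ : ⟪x₁, x₂⟫ = r ^ 2 / 2 := by linarith
      intro i j
      fin_cases i <;> fin_cases j <;>
        simp [inner_smul_left, inner_smul_right, real_inner_comm x₁, real_inner_comm hexBasis₁,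
          hx₁₂, inner_hexBasis, norm_smul, hn, norm_hexBasis₁, norm_hexBasis₂, r] <;> ring)
  set f := r⁻¹ • toEuclideanLin U
  have hf₁ : f x₁ = hexBasis₁ := by
    simpa [f, hr] using congrArg (r⁻¹ • ·) (hUx 0)
  have hf₂ : f x₂ = hexBasis₂ := by
    simpa [f, hr] using congrArg (r⁻¹ • ·) (hUx 1)
  have hfB := (isZBasis_image_iff (injective_smul_toEuclideanLin hU (inv_ne_zero hr))).2 hB
  rw [hf₁, hf₂] at hfB
  exact ⟨r⁻¹, U, inv_ne_zero hr, hU, hexLattice_isZBasis.2.trans hfB.2.symm⟩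

lemma LatSimilar.exists_hexagonal_basis (h : LatSimilar Λ hexLattice) :
    ∃ w₁ w₂, IsZBasis Λ w₁ w₂ ∧ ‖w₂‖ = ‖w₁‖ ∧ 2 * ⟪w₁, w₂⟫ = ‖w₁‖ ^ 2 := by
  obtain ⟨α, U, hα, hU, him⟩ := h
  set f := α • toEuclideanLin U
  change hexLattice = f '' Λ at him
  obtain ⟨w₁, hw₁, hf₁⟩ : hexBasis₁ ∈ f '' Λ := him ▸ hexLattice_isZBasis.left_mem_s16
  obtain ⟨w₂, hw₂, hf₂⟩ : hexBasis₂ ∈ f '' Λ := him ▸ hexLattice_isZBasis.right_mem_s16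
  have hB : IsZBasis Λ w₁ w₂ := (isZBasis_image_iff (injective_smul_toEuclideanLin hU hα)).1
    (by rw [← him, hf₁, hf₂]; exact hexLattice_isZBasis)
  have hα2 : α ^ 2 ≠ 0 := pow_ne_zero 2 hα
  have hinner := inner_smul_toEuclideanLin hU α
  have hnorm (w : E2) : ‖f w‖ ^ 2 = α ^ 2 * ‖w‖ ^ 2 := by
    rw [← real_inner_self_eq_norm_sq, hinner, real_inner_self_eq_norm_sq]
  refine ⟨w₁, w₂, hB, ?_, mul_left_cancel₀ hα2 ?_⟩
  · rw [← sq_eq_sq₀ (norm_nonneg _) (norm_nonneg _), ← mul_right_inj' hα2, ← hnorm, ← hnorm,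
      hf₁, hf₂, norm_hexBasis₁, norm_hexBasis₂]
  · rw [← hnorm, mul_left_comm, ← hinner, hf₁, hf₂, norm_hexBasis₁, inner_hexBasis]
    norm_num

end Similarity

/-- For a well-rounded full-rank lattice `Λ ⊆ ℝ²`,
`Δ(Λ) = π/(4 sin θ(Λ)) ≤ π/(2√3)`, with equality iff `θ(Λ) = π/3`, and the lattices with
`θ(Λ) = π/3` are precisely those similar to the hexagonal lattice. -/
theorem stmt16 (Λ : Set E2) (hΛ : IsLattice Λ)
    (hWR : succMin Λ 1 = succMin Λ 2) :
    density Λ = π / (4 * Real.sin (latAngle Λ)) ∧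
      density Λ ≤ π / (2 * Real.sqrt 3) ∧
      (density Λ = π / (2 * Real.sqrt 3) ↔ latAngle Λ = π / 3) ∧
      (latAngle Λ = π / 3 ↔ LatSimilar Λ hexLattice) := by
  obtain ⟨x₁, x₂, hB⟩ := hΛ
  obtain ⟨y₁, y₂, hP, hθ⟩ := exists_isMinPair_latAngle_eq ⟨x₁, x₂, hB⟩
  have hY := hP.isZBasis_s16 hWR hB
  have hn := hP.norm_eq hWR
  have hdens : density Λ = π / (4 * Real.sin (latAngle Λ)) :=
    hθ ▸ hY.density_eq hP.2.2.2.1 (hn.trans hP.2.2.2.1)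
  have hθ₁ : π / 3 ≤ latAngle Λ := hθ ▸ hP.pi_div_three_le_angle hWR hB
  have hθ₂ : latAngle Λ ≤ π / 2 := hθ ▸ hP.2.2.2.2.2
  have hhex : π / (2 * √3) = π / (4 * Real.sin (π / 3)) := by
    rw [Real.sin_pi_div_three]; ring
  have hiff : density Λ = π / (2 * √3) ↔ latAngle Λ = π / 3 := by
    rw [hdens, hhex]; exact pi_div_four_sin_eq_iff hθ₁ hθ₂
  refine ⟨hdens, hdens ▸ hhex ▸ pi_div_four_sin_le hθ₁ hθ₂, hiff,
    fun h => hY.latSimilar_hexLattice hn ((angle_eq_pi_div_three_iff hP.ne_zero hn).1 (hθ ▸ h)),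
    fun h => ?_⟩
  obtain ⟨w₁, w₂, hW, hwn, hwi⟩ := h.exists_hexagonal_basis
  exact hiff.1 (by rw [hW.density_eq_of_hexagonal hwn hwi, hhex])
end
end
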